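/- For every s₀ ∈ ℝ and every L > 0 there exists a constant Ĉ > 0, depending only on s₀ and L, such that for every d ∈ (0, L) with s₀ < (π/d)² and every s ∈ [s₀, (π/d)²) one has F_d^D(s) ≥ -Ĉ/d. -/

import Mathlib

/-- The set `Π_d^D = { (2πk/d)² : k ∈ ℕ, k ≥ 1 }`. -/
noncomputable def PiD (d : ℝ) : Set ℝ :=
  {x | ∃ k : ℕ, 1 ≤ k ∧ x = (2 * Real.pi * k / d) ^ 2}

/-- The function `F_d^D`. -/
noncomputable def FD (d lam : ℝ) : ℝ :=
  if 0 < lam then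
    -2 * Real.sqrt lam * (Real.cos (d * Real.sqrt lam / 2) / Real.sin (d * Real.sqrt lam / 2))
  else if lam = 0 then -4 / d
  else
    -2 * Real.sqrt (-lam) *
      (Real.cosh (d * Real.sqrt (-lam) / 2) / Real.sinh (d * Real.sqrt (-lam) / 2))

/-- For every `s₀ ∈ ℝ` and every `L > 0` there exists a constant `Ĉ > 0` depending only on
`s₀` and `L` such that for every `d ∈ (0, L)` with `s₀ < (π/d)²` and every
`s ∈ [s₀, (π/d)²)` one has `F_d^D(s) ≥ -Ĉ/d`. -/
theorem stmt10 (s₀ L : ℝ) (hL : 0 < L) :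
    ∃ C : ℝ, 0 < C ∧
      ∀ d : ℝ, 0 < d → d < L → s₀ < (Real.pi / d) ^ 2 →
        ∀ s : ℝ, s₀ ≤ s → s < (Real.pi / d) ^ 2 → FD d s ≥ -C / d := by
  set A := Real.sqrt |s₀| with hA
  have hA0 : 0 ≤ A := Real.sqrt_nonneg _
  refine ⟨4 + 2 * L * A + 1, by positivity, ?_⟩
  intro d hd hdL hπ s hs₀s hs
  have hC4 : (4:ℝ) ≤ 4 + 2 * L * A + 1 := by nlinarith
  rw [FD, ge_iff_le, neg_div]
  rcases lt_trichotomy s 0 with hneg | hzero | hpos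
  · rw [if_neg (by linarith), if_neg (by linarith)]
    set r := Real.sqrt (-s) with hrdef
    have hr : 0 < r := Real.sqrt_pos.mpr (by linarith)
    set t := d * r / 2 with htdef
    have ht : 0 < t := by positivity
    have hsinh : 0 < Real.sinh t := Real.sinh_pos_iff.mpr ht
    have h1 : t ≤ Real.sinh t := (Real.self_lt_sinh_iff.mpr ht).le
    have h2 : Real.cosh t - Real.sinh t ≤ 1 := by
      rw [Real.cosh_sub_sinh]
      exact Real.exp_le_one_iff.mpr (by linarith)
    -- cosh t / sinh t ≤ 1 + 1/t
    have hdiv : Real.cosh t / Real.sinh t ≤ 1 + 1 / t := by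
      rw [div_le_iff₀ hsinh]
      have : Real.sinh t / t ≥ 1 := (one_le_div ht).mpr h1
      calc Real.cosh t ≤ Real.sinh t + 1 := by linarith
        _ ≤ Real.sinh t + Real.sinh t / t := by linarith
        _ = (1 + 1/t) * Real.sinh t := by field_simp
    have hrA : r ≤ A := by
      rw [hrdef, hA]
      exact Real.sqrt_le_sqrt (by cases abs_cases s₀ with
        | inl h => linarith [h.1]
        | inr h => linarith [h.1])
    have key : 2 * r * (Real.cosh t / Real.sinh t) ≤ 2 * r + 4 / d := by
      have := mul_le_mul_of_nonneg_left hdiv (by positivity : (0:ℝ) ≤ 2 * r)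
      have heq : 2 * r * (1 + 1/t) = 2 * r + 4 / d := by
        rw [htdef]; field_simp; ring
      linarith
    have hLd : 2 * L * A / d ≥ 2 * A := by
      rw [ge_iff_le, le_div_iff₀ hd]; nlinarith
    have hfin : 2 * r + 4 / d ≤ (4 + 2 * L * A + 1) / d := by
      have : (4 + 2 * L * A + 1) / d = 4/d + 2*L*A/d + 1/d := by ring
      have h1d : 0 < 1/d := by positivity
      nlinarith
    linarith
  · rw [if_neg (by simp [hzero]), if_pos hzero, neg_div]
    apply neg_le_neg
    gcongr
  · rw [if_pos hpos]
    set r := Real.sqrt s with hrdef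
    have hr : 0 < r := Real.sqrt_pos.mpr hpos
    set θ := d * r / 2 with hθdef
    have hθ : 0 < θ := by positivity
    have hrπ : r < Real.pi / d := by
      have : Real.sqrt s < Real.sqrt ((Real.pi/d)^2) := by
        apply Real.sqrt_lt_sqrt (le_of_lt hpos) hs
      rwa [Real.sqrt_sq (by positivity)] at this
    have hθπ : θ < Real.pi / 2 := by
      rw [hθdef]
      rw [lt_div_iff₀ hd] at hrπ
      linarith
    have hsin : 0 < Real.sin θ :=
      Real.sin_pos_of_pos_of_lt_pi hθ (by linarith [Real.pi_pos])
    have hcos : 0 < Real.cos θ := Real.cos_pos_of_mem_Ioo ⟨by linarith, hθπ⟩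
    have htan := Real.lt_tan hθ hθπ
    rw [Real.tan_eq_sin_div_cos, lt_div_iff₀ hcos] at htan
    have hdiv : Real.cos θ / Real.sin θ ≤ 1 / θ := by
      rw [div_le_div_iff₀ hsin hθ]
      nlinarith
    have key : 2 * r * (Real.cos θ / Real.sin θ) ≤ 4 / d := by
      have := mul_le_mul_of_nonneg_left hdiv (by positivity : (0:ℝ) ≤ 2 * r)
      have heq : 2 * r * (1/θ) = 4 / d := by
        rw [hθdef]; field_simp; ring
      linarith
    have hfin : 4 / d ≤ (4 + 2 * L * A + 1) / d := by gcongr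
    linarith
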